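/- arXiv:0912.1964 — 6 statements merged into one kernel-verified Lean document; each statement's English description precedes it below -/
import Mathlib

section
/- Let A be an abelian group and ψ: G → H a surjective homomorphism of finite groups. Then there is a surjective homomorphism ψ̃: A ≀ G → A ≀ H defined by ψ̃(f, g) = (ψ̂(f), ψ(g)), where ψ̂(f)(h) = ∏_{k ∈ ψ⁻¹(h)} f(k). -/
/-- The automorphism action of `G` on `G → H` by right translation:
`(wrAut H G g) f x = f (x * g)`, so that the semidirect product below has
multiplication `(f₁, g₁)(f₂, g₂) = (f₁ · f₂^{g₁⁻¹}, g₁g₂)` with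
`f₂^{g₁⁻¹}(x) = f₂ (x * g₁)`. -/
def wrAut (H G : Type*) [Group H] [Group G] : G →* MulAut (G → H) where
  toFun g :=
    { toFun := fun f x => f (x * g)
      invFun := fun f x => f (x * g⁻¹)
      left_inv := fun f => funext fun x => by simp [mul_assoc]
      right_inv := fun f => funext fun x => by simp [mul_assoc]
      map_mul' := fun f₁ f₂ => rfl }
  map_one' := MulEquiv.ext fun f => funext fun x => by simp
  map_mul' := fun g₁ g₂ => MulEquiv.ext fun f => funext fun x => by simp [mul_assoc]

/-- The standard (regular) wreath product `H ≀ G`. -/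
abbrev Wr (H G : Type*) [Group H] [Group G] := SemidirectProduct (G → H) G (wrAut H G)

/-- For `A` abelian and a surjection `ψ : G → H` of finite groups,
`ψ̃(f, g) = (h ↦ ∏_{k ∈ ψ⁻¹(h)} f k, ψ g)` is a surjective homomorphism
`A ≀ G → A ≀ H`. -/
theorem stmt4 {A G H : Type*} [CommGroup A] [Group G] [Group H] [Fintype G] [Fintype H]
    [DecidableEq H] (ψ : G →* H) (hψ : Function.Surjective ψ) :
    ∃ Ψ : Wr A G →* Wr A H,
      (∀ (f : G → A) (g : G),
        Ψ ⟨f, g⟩ = ⟨fun h => ∏ k ∈ Finset.univ.filter (fun k => ψ k = h), f k, ψ g⟩) ∧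
      Function.Surjective Ψ := by
  classical
  set Φ : (G → A) → (H → A) := fun f h => ∏ k ∈ Finset.univ.filter (fun k => ψ k = h), f k
    with hΦ
  have hΦmul : ∀ f₁ f₂ : G → A, Φ (f₁ * f₂) = Φ f₁ * Φ f₂ := by
    intro f₁ f₂; funext h; simp [hΦ, Finset.prod_mul_distrib]
  have hΦeq : ∀ (g : G) (f : G → A), Φ (wrAut A G g f) = wrAut A H (ψ g) (Φ f) := by
    intro g f
    funext h
    show ∏ k ∈ Finset.univ.filter (fun k => ψ k = h), f (k * g)
        = ∏ k ∈ Finset.univ.filter (fun k => ψ k = h * ψ g), f k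
    refine Finset.prod_nbij' (fun k => k * g) (fun k => k * g⁻¹) ?_ ?_ ?_ ?_ ?_
    · intro k hk
      simp only [Finset.mem_filter, Finset.mem_univ, true_and] at hk ⊢
      simp [hk]
    · intro k hk
      simp only [Finset.mem_filter, Finset.mem_univ, true_and] at hk ⊢
      simp [hk]
    · intro k _; simp
    · intro k _; simp
    · intro k _; rfl
  refine ⟨{ toFun := fun x => ⟨Φ x.left, ψ x.right⟩
            map_one' := ?_
            map_mul' := ?_ }, fun f g => rfl, ?_⟩
  · ext h
    · show Φ 1 h = 1
      simp [hΦ]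
    · simp
  · rintro ⟨f₁, g₁⟩ ⟨f₂, g₂⟩
    ext h
    · show Φ (f₁ * wrAut A G g₁ f₂) h = (Φ f₁ * wrAut A H (ψ g₁) (Φ f₂)) h
      rw [hΦmul, hΦeq]
    · simp
  · rintro ⟨F, h⟩
    obtain ⟨g, hg⟩ := hψ h
    let s : H → G := Function.surjInv hψ
    have hs : ∀ x, ψ (s x) = x := Function.surjInv_eq hψ
    refine ⟨⟨fun k => if k = s (ψ k) then F (ψ k) else 1, g⟩, ?_⟩
    ext x
    · show Φ _ x = F x
      simp only [hΦ]
      rw [Finset.prod_eq_single (s x)]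
      · simp [hs]
      · intro k hk hne
        simp only [Finset.mem_filter, Finset.mem_univ, true_and] at hk
        rw [if_neg]; subst hk; exact fun e => hne e
      · intro hk
        simp [hs] at hk
    · exact hg
end

section
/- Let A, B, C be finite groups with A abelian. Then there exists a surjective group homomorphism from A ≀ (B ≀ C) onto (A ≀ B) ≀ C. -/
open scoped Classical in
noncomputable def pi5 (A B C : Type*) [CommGroup A] [Group B] [Group C]
    [Fintype (C → B)] : Wr A (Wr B C) →* Wr (Wr A B) C where
  toFun p :=
    ⟨fun x => ⟨fun b => ∏ h : C → B, if h 1 = b then p.left ⟨h, x⟩ else 1,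
      p.right.left x⟩, p.right.right⟩
  map_one' := by
    apply SemidirectProduct.ext
    · funext x
      apply SemidirectProduct.ext
      · funext b
        simp
      · rfl
    · rfl
  map_mul' p q := by
    apply SemidirectProduct.ext
    · funext x
      apply SemidirectProduct.ext
      · funext b
        show (∏ h : C → B, if h 1 = b then (p * q).left ⟨h, x⟩ else 1)
            = (∏ h : C → B, if h 1 = b then p.left ⟨h, x⟩ else 1) *
              ∏ h : C → B, if h 1 = b * p.right.left x
                then q.left ⟨h, x * p.right.right⟩ else 1
        have hmul : ∀ h : C → B,
            (p * q).left ⟨h, x⟩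
              = p.left ⟨h, x⟩ * q.left ⟨h * fun y => p.right.left (y * x), x * p.right.right⟩ :=
          fun h => rfl
        simp only [hmul, ite_mul_one, Finset.prod_mul_distrib]
        congr 1
        refine Fintype.prod_equiv (Equiv.mulRight (fun y => p.right.left (y * x))) _ _ ?_
        intro h
        show _ = (if (h * fun y => p.right.left (y * x)) 1 = b * p.right.left x
            then q.left ⟨h * fun y => p.right.left (y * x), x * p.right.right⟩ else 1)
        have : ((h * fun y => p.right.left (y * x)) 1 = b * p.right.left x) ↔ h 1 = b := by
          simp [Pi.mul_apply]
        rw [if_congr this rfl rfl]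
      · rfl
    · rfl

/-- For finite groups `A, B, C` with `A` abelian there is a
surjective homomorphism `A ≀ (B ≀ C) → (A ≀ B) ≀ C`. -/
theorem stmt5 (A B C : Type*) [CommGroup A] [Group B] [Group C]
    [Finite A] [Finite B] [Finite C] :
    ∃ π : Wr A (Wr B C) →* Wr (Wr A B) C, Function.Surjective π := by
  classical
  have : Fintype (C → B) := Fintype.ofFinite _
  refine ⟨pi5 A B C, fun y => ?_⟩
  refine ⟨⟨fun w => if w.left = fun _ => w.left 1 then (y.left w.right).left (w.left 1) else 1,
    ⟨fun x => (y.left x).right, y.right⟩⟩, ?_⟩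
  apply SemidirectProduct.ext
  · funext x
    apply SemidirectProduct.ext
    · funext b
      show (∏ h : C → B, if h 1 = b then
          (if h = fun _ => h 1 then (y.left x).left (h 1) else 1) else 1) = (y.left x).left b
      rw [Fintype.prod_eq_single (fun _ => b)]
      · simp
      · intro h hh
        by_cases h1 : h 1 = b
        · rw [if_pos h1, if_neg]
          intro he
          exact hh (by rw [he, h1])
        · rw [if_neg h1]
    · rfl
  · rfl
end

section
/- Let A, B, C be finite groups with A abelian. Then there exists a surjective group homomorphism from (A ≀ B) ≀ C onto (A × B) ≀ C. -/
/-!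
Since `A` is abelian and right translation permutes `B`, the product of the coordinates of the
base is invariant under the action of `B`, so `(f, b) ↦ (∏ₓ f x, b)` is a surjective homomorphism
`A ≀ B → A × B`. Wreath products with `C` are functorial in the base group
and preserve surjectivity, so this map induces `(A ≀ B) ≀ C ↠ (A × B) ≀ C`.
-/

namespace SemidirectProduct

variable {N₁ G₁ N₂ G₂ : Type*} [Group N₁] [Group G₁] [Group N₂] [Group G₂]
  {φ₁ : G₁ →* MulAut N₁} {φ₂ : G₂ →* MulAut N₂}

theorem map_surjective {fn : N₁ →* N₂} {fg : G₁ →* G₂}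
    (h : ∀ g, fn.comp (φ₁ g).toMonoidHom = (φ₂ (fg g)).toMonoidHom.comp fn)
    (hn : Function.Surjective fn) (hg : Function.Surjective fg) :
    Function.Surjective (map fn fg h) := by
  rintro ⟨n, g⟩
  obtain ⟨n', rfl⟩ := hn n
  obtain ⟨g', rfl⟩ := hg g
  exact ⟨⟨n', g'⟩, rfl⟩

end SemidirectProduct

namespace Wr

def map {H K : Type*} (C : Type*) [Group H] [Group K] [Group C] (φ : H →* K) :
    Wr H C →* Wr K C :=
  SemidirectProduct.map (φ.compLeft C) (MonoidHom.id C) fun _ => rfl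

theorem map_surjective {H K : Type*} (C : Type*) [Group H] [Group K] [Group C] {φ : H →* K}
    (hφ : Function.Surjective φ) : Function.Surjective (map C φ) :=
  SemidirectProduct.map_surjective _ hφ.comp_left Function.surjective_id

variable (A B : Type*) [CommGroup A] [Group B] [Fintype B]

def baseProd : (B → A) →* A :=
  MonoidHom.mk' (fun f => ∏ b, f b) fun _ _ => Finset.prod_mul_distrib

theorem baseProd_wrAut (b : B) (f : B → A) : baseProd A B (wrAut A B b f) = baseProd A B f :=
  Fintype.prod_equiv (Equiv.mulRight b) _ _ fun _ => rfl

def augmentation : Wr A B →* A × B :=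
  SemidirectProduct.lift ((MonoidHom.inl A B).comp (baseProd A B)) (MonoidHom.inr A B)
    fun b => by ext f <;> simp [baseProd_wrAut]

theorem augmentation_surjective : Function.Surjective (augmentation A B) := by
  classical
  rintro ⟨a, b⟩
  refine ⟨SemidirectProduct.inl (Pi.mulSingle 1 a) * SemidirectProduct.inr b, ?_⟩
  simp [augmentation, baseProd]

end Wr

theorem stmt6_general (A B C : Type*) [CommGroup A] [Group B] [Group C]
    [Finite B] :
    ∃ π : Wr (Wr A B) C →* Wr (A × B) C, Function.Surjective π := by
  have := Fintype.ofFinite B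
  exact ⟨Wr.map C (Wr.augmentation A B), Wr.map_surjective C (Wr.augmentation_surjective A B)⟩

/-- For finite groups `A, B, C` with `A` abelian there is a
surjective homomorphism `(A ≀ B) ≀ C → (A × B) ≀ C`. -/
theorem stmt6 (A B C : Type*) [CommGroup A] [Group B] [Group C]
    [Finite A] [Finite B] [Finite C] :
    ∃ π : Wr (Wr A B) C →* Wr (A × B) C, Function.Surjective π :=
  stmt6_general A B C
end

section
/- Let A₁, ..., A_r be finite abelian groups. Then the ascending iterated standard wreath product (···((A₁ ≀ A₂) ≀ A₃) ≀ ···) ≀ A_r is a surjective homomorphic image of the descending iterated standard wreath product A₁ ≀ (A₂ ≀ (··· ≀ A_r)···). -/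
/-- The standard wreath product of bundled groups. -/
def WrGrp (H G : GrpCat.{u}) : GrpCat.{u} := GrpCat.of (Wr H G)

/-- Descending iterated standard wreath product `C₁ ≀ (C₂ ≀ (⋯ ≀ C_r)⋯)`,
given by a head group and the list of remaining groups. -/
def descW : GrpCat.{u} → List GrpCat.{u} → GrpCat.{u}
  | G, [] => G
  | G, H :: t => WrGrp G (descW H t)

/-- Ascending iterated standard wreath product `(⋯(C₁ ≀ C₂) ≀ ⋯) ≀ C_r`,
given by a head group and the list of remaining groups. -/
def ascW : GrpCat.{u} → List GrpCat.{u} → GrpCat.{u}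
  | G, [] => G
  | G, H :: t => ascW (WrGrp G H) t

/-! For abelian `A` and finite `B`, `C` there is a surjection `A ≀ (B ≀ C) ↠ (A ≀ B) ≀ C`:
the base group `A^(B ≀ C)`, with coordinates indexed by pairs `(b, x)`, `b : C → B`, is
collapsed onto `A^(B × C)` by multiplying coordinates over the fibres of `b ↦ b 1`, which is
multiplicative because `A` is abelian. Both `_ ≀ C` and, for abelian `A` and finite groups,
`A ≀ _` preserve surjections (the latter again by multiplying along fibres). Induction on the
number of factors then moves the brackets one at a time:
`A₁ ≀ (A₂ ≀ ⋯) ↠ A₁ ≀ ((A₂ ≀ A₃) ≀ ⋯) ↠ ((A₁ ≀ A₂) ≀ A₃) ≀ ⋯`. -/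

open Function

namespace SemidirectProduct

variable {N G N' G' : Type*} [Group N] [Group G] [Group N'] [Group G']
  {φ : G →* MulAut N} {φ' : G' →* MulAut N'}

instance [Finite N] [Finite G] : Finite (N ⋊[φ] G) :=
  Finite.of_equiv _ equivProd.symm

theorem map_surjective_s7 {fn : N →* N'} {fg : G →* G'} (h) (hn : Surjective fn)
    (hg : Surjective fg) : Surjective (map (φ₁ := φ) (φ₂ := φ') fn fg h) := by
  rintro ⟨n, g⟩
  obtain ⟨n, rfl⟩ := hn n
  obtain ⟨g, rfl⟩ := hg g
  exact ⟨⟨n, g⟩, rfl⟩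

end SemidirectProduct

section FiberProd

variable {α β M : Type*} [CommMonoid M] [Finite α]

noncomputable def fiberProd (σ : α → β) : (α → M) →* (β → M) where
  toFun f b := ∏ᶠ a : {a // σ a = b}, f a
  map_one' := funext fun _ => finprod_one
  map_mul' _ _ := funext fun _ => finprod_mul_distrib (Set.toFinite _) (Set.toFinite _)

theorem fiberProd_apply (σ : α → β) (f : α → M) (b : β) :
    fiberProd σ f b = ∏ᶠ a : {a // σ a = b}, f a :=
  rfl

theorem fiberProd_comp_equiv (σ : α → β) (e : α ≃ α) {τ : β → β} (hτ : Injective τ)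
    (he : ∀ a, σ (e a) = τ (σ a)) (f : α → M) (b : β) :
    fiberProd σ (f ∘ e) b = fiberProd σ f (τ b) :=
  finprod_comp_equiv (e.subtypeEquiv fun a => by rw [he, hτ.eq_iff])
    (f := fun a : {a // σ a = τ b} => f a)

theorem fiberProd_surjective {σ : α → β} (hσ : Surjective σ) :
    Surjective (fiberProd (M := M) σ) := by
  intro g
  refine ⟨extend (surjInv hσ) g 1, funext fun b => ?_⟩
  rw [fiberProd_apply, finprod_eq_single _ ⟨surjInv hσ b, surjInv_eq hσ b⟩,
    (injective_surjInv hσ).extend_apply]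
  rintro ⟨a, rfl⟩ ha
  refine extend_apply' _ _ _ ?_
  rintro ⟨b, rfl⟩
  exact ha (Subtype.ext (congrArg (surjInv hσ) (surjInv_eq hσ b).symm))

end FiberProd

namespace Wr

section Left

variable {A B C : Type*} [Group A] [Group B] [Group C]

def mapLeft (τ : A →* B) : Wr A C →* Wr B C :=
  SemidirectProduct.map (τ.compLeft C) (MonoidHom.id C) fun _ => MonoidHom.ext fun _ => rfl

theorem mapLeft_surjective {τ : A →* B} (hτ : Surjective τ) :
    Surjective (mapLeft (C := C) τ) :=
  SemidirectProduct.map_surjective_s7 _ hτ.comp_left surjective_id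

end Left

variable {A B C : Type*} [CommGroup A] [Group B] [Group C]

noncomputable def mapRight [Finite B] (σ : B →* C) : Wr A B →* Wr A C :=
  SemidirectProduct.map (fiberProd σ) σ fun w => MonoidHom.ext fun f => funext fun c =>
    fiberProd_comp_equiv σ (Equiv.mulRight w) (mul_left_injective (σ w)) (fun b => map_mul σ b w)
      f c

theorem mapRight_surjective [Finite B] {σ : B →* C} (hσ : Surjective σ) :
    Surjective (mapRight (A := A) σ) :=
  SemidirectProduct.map_surjective_s7 _ (fiberProd_surjective hσ) hσ

noncomputable def reassoc [Finite B] [Finite C] : Wr A (Wr B C) →* Wr (Wr A B) C where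
  toFun p :=
    ⟨fun x => ⟨fiberProd (fun b : C → B => b 1) (fun b => p.left ⟨b, x⟩), p.right.left x⟩,
      p.right.right⟩
  map_one' := by
    ext x y
    · exact congrFun (map_one (fiberProd fun b : C → B => b 1)) y
    · rfl
    · rfl
  map_mul' p q := by
    ext x y
    · show fiberProd (fun b : C → B => b 1) ((fun b => p.left ⟨b, x⟩) *
            (fun b => q.left ⟨b, x * p.right.right⟩) ∘
              Equiv.mulRight fun z => p.right.left (z * x)) y =
          fiberProd (fun b : C → B => b 1) (fun b => p.left ⟨b, x⟩) y *
            fiberProd (fun b : C → B => b 1) (fun b => q.left ⟨b, x * p.right.right⟩)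
              (y * p.right.left x)
      rw [map_mul, Pi.mul_apply,
        fiberProd_comp_equiv _ _ (mul_left_injective (p.right.left x)) fun b => by simp]
    · rfl
    · rfl

theorem reassoc_surjective [Finite B] [Finite C] :
    Surjective (reassoc (A := A) (B := B) (C := C)) := by
  rintro ⟨F, c⟩
  have hev : Surjective fun b : C → B => b 1 := fun y => ⟨fun _ => y, rfl⟩
  choose g hg using fun x => fiberProd_surjective (M := A) hev (F x).left
  refine ⟨⟨fun w => g w.right w.left, ⟨fun x => (F x).right, c⟩⟩, ?_⟩
  ext x y
  · exact congrFun (hg x) y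
  · rfl
  · rfl

end Wr

instance (H G : GrpCat) [Finite H] [Finite G] : Finite (WrGrp H G) :=
  inferInstanceAs (Finite (Wr H G))

theorem finite_descW (H : GrpCat) [Finite H] (t : List GrpCat) (ht : ∀ K ∈ t, Finite K) :
    Finite (descW H t) := by
  induction t generalizing H with
  | nil => assumption
  | cons C t ih =>
    obtain ⟨hC, ht⟩ := List.forall_mem_cons.1 ht
    have := ih C ht
    exact inferInstanceAs (Finite (WrGrp H (descW C t)))

theorem exists_surjective_ascW_of_surjective {K K' : GrpCat} (τ : K →* K')
    (hτ : Surjective τ) (t : List GrpCat) : ∃ ρ : ascW K t →* ascW K' t, Surjective ρ := by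
  induction t generalizing K K' with
  | nil => exact ⟨τ, hτ⟩
  | cons C t ih => exact ih (Wr.mapLeft τ) (Wr.mapLeft_surjective hτ)

theorem exists_surjective_wr_ascW (A : GrpCat) (hA : ∀ x y : A, x * y = y * x)
    (H : GrpCat) [Finite H] (t : List GrpCat) (ht : ∀ K ∈ t, Finite K) :
    ∃ π : Wr A (ascW H t) →* ascW (WrGrp A H) t, Surjective π := by
  let : CommGroup A := { (inferInstance : Group A) with mul_comm := hA }
  induction t generalizing H with
  | nil => exact ⟨MonoidHom.id _, surjective_id⟩
  | cons C t ih =>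
    obtain ⟨hC, ht⟩ := List.forall_mem_cons.1 ht
    obtain ⟨π, hπ⟩ := ih (WrGrp H C) ht
    obtain ⟨ρ, hρ⟩ := exists_surjective_ascW_of_surjective
      (K := WrGrp A (WrGrp H C)) (K' := WrGrp (WrGrp A H) C) Wr.reassoc Wr.reassoc_surjective t
    exact ⟨ρ.comp π, hρ.comp hπ⟩

/-- For finite abelian groups `A₁, …, A_r` (given as the head `A₁`
together with the list `[A₂, …, A_r]`), the ascending iterated wreath product
`(⋯(A₁ ≀ A₂) ≀ ⋯) ≀ A_r` is a surjective homomorphic image of the descending one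
`A₁ ≀ (A₂ ≀ (⋯ ≀ A_r)⋯)`. -/
theorem stmt7 (A₁ : GrpCat.{u}) (l : List GrpCat.{u})
    (h : ∀ H ∈ A₁ :: l, Finite H ∧ ∀ x y : H, x * y = y * x) :
    ∃ π : descW A₁ l →* ascW A₁ l, Function.Surjective π := by
  induction l generalizing A₁ with
  | nil => exact ⟨MonoidHom.id _, surjective_id⟩
  | cons H t ih =>
    obtain ⟨⟨-, hA⟩, hHt⟩ := List.forall_mem_cons.1 h
    obtain ⟨⟨hH, -⟩, ht⟩ := List.forall_mem_cons.1 hHt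
    have hfin : ∀ K ∈ t, Finite K := fun K hK => (ht K hK).1
    let : CommGroup A₁ := { (inferInstance : Group A₁) with mul_comm := hA }
    have := finite_descW H t hfin
    obtain ⟨σ, hσ⟩ := ih H hHt
    obtain ⟨π, hπ⟩ := exists_surjective_wr_ascW A₁ hA H t hfin
    exact ⟨π.comp (Wr.mapRight σ), hπ.comp (Wr.mapRight_surjective hσ)⟩
end

section
/- Let C₁, ..., C_r be nontrivial finite cyclic groups. Then the derived length of the descending iterated standard wreath product C₁ ≀ (C₂ ≀ (··· ≀ C_r)···) equals r. -/
/-- Minimal number of generators of a group. -/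
noncomputable def mingen (G : Type*) [Group G] : ℕ :=
  sInf {n | ∃ S : Finset G, S.card = n ∧ Subgroup.closure (S : Set G) = ⊤}

/-- `d(G)`: minimal size of a subset whose normal closure is all of `G`. -/
noncomputable def dgen (G : Type*) [Group G] : ℕ :=
  sInf {n | ∃ S : Finset G, S.card = n ∧ Subgroup.normalClosure (S : Set G) = ⊤}

/-- Derived length: the least `n` with `derivedSeries G n = ⊥`. -/
noncomputable def dl (G : Type*) [Group G] : ℕ :=
  sInf {n | derivedSeries G n = ⊥}

/-!
Let `W = H ≀ G` with `H` nontrivial abelian and `G` solvable of derived length `d`. The base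
group `G → H` is abelian and is the kernel of `W → G`, so `W⁽ᵈ⁾` lies in it and `W⁽ᵈ⁺¹⁾ = 1`.
Conversely, the derived series of `G` is strict below `d`, so there are `gₖ ∈ G⁽ᵏ⁾ \ G⁽ᵏ⁺¹⁾`.
Starting from a function supported at `1`, take at each step the commutator with a lift of
`gₖ` in `W⁽ᵏ⁾`. This is again a base element, now in `W⁽ᵏ⁺¹⁾`, and its support still meets
`G⁽ᵏ⁺¹⁾` exactly in `1`: its value at `1` is the inverse of the old one, and at any other point
`x` of `G⁽ᵏ⁺¹⁾` it only involves the old values at `x` and `x gₖ`, two nontrivial points of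
`G⁽ᵏ⁾`. Hence `W⁽ᵈ⁾ ≠ 1` and `W` has derived length `d + 1`; induct on the number of factors.
-/

open SemidirectProduct Function

open scoped commutatorElement

theorem derivedSeries_succ_eq_bot_of_isMulCommutative_ker {G Q : Type*} [Group G] [Group Q]
    (f : G →* Q) [IsMulCommutative f.ker] {n : ℕ} (hn : derivedSeries Q n = ⊥) :
    derivedSeries G (n + 1) = ⊥ := by
  have hle : derivedSeries G n ≤ f.ker := fun x hx => by
    simpa [hn] using map_derivedSeries_le_derivedSeries f n ⟨x, hx, rfl⟩
  rw [derivedSeries_succ, eq_bot_iff, ← Subgroup.commutator_self_eq_bot_iff.2 ‹_›]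
  exact Subgroup.commutator_mono hle hle

theorem derivedSeries_succ_lt_of_ne_bot {G : Type*} [Group G] {N k : ℕ}
    (hN : derivedSeries G N = ⊥) (hk : derivedSeries G k ≠ ⊥) :
    derivedSeries G (k + 1) < derivedSeries G k := by
  refine (derivedSeries_antitone G k.le_succ).lt_of_ne fun heq => hk ?_
  have hstable : ∀ j, derivedSeries G (k + j) = derivedSeries G k := fun j => by
    induction j with
    | zero => rfl
    | succ j ih => rw [← add_assoc, derivedSeries_succ, ih, ← derivedSeries_succ, heq]
  have hkN : k ≤ N := by
    by_contra! hNk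
    exact hk (eq_bot_iff.2 (hN ▸ derivedSeries_antitone G hNk.le))
  rw [← hstable (N - k), Nat.add_sub_cancel' hkN, hN]

theorem dl_eq_succ_iff {G : Type*} [Group G] (n : ℕ) :
    dl G = n + 1 ↔ derivedSeries G (n + 1) = ⊥ ∧ derivedSeries G n ≠ ⊥ :=
  Nat.sInf_upward_closed_eq_succ_iff
    (fun _ _ hle hbot => eq_bot_iff.2 (hbot ▸ derivedSeries_antitone G hle)) n

theorem dl_eq_one {G : Type*} [Group G] [IsMulCommutative G] [Nontrivial G] : dl G = 1 :=
  (dl_eq_succ_iff 0).2 ⟨by rw [derivedSeries_one, commutator_eq_bot], top_ne_bot⟩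

theorem isSolvable_of_dl_ne_zero {G : Type*} [Group G] (h : dl G ≠ 0) : Group.IsSolvable G :=
  ⟨Nat.nonempty_of_pos_sInf (Nat.pos_of_ne_zero h)⟩

theorem SemidirectProduct.commutatorElement_inl {N G : Type*} [Group N] [Group G]
    {φ : G →* MulAut N} (a : N ⋊[φ] G) (n : N) :
    ⁅a, (inl n : N ⋊[φ] G)⁆ = inl (a.left * φ a.right n * a.left⁻¹ * n⁻¹) := by
  ext <;> simp [commutatorElement_def]

section Wr

variable {H G : Type*} [Group H] [Group G]

theorem derivedSeries_wr_succ_eq_bot [IsMulCommutative H] {n : ℕ}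
    (hn : derivedSeries G n = ⊥) : derivedSeries (Wr H G) (n + 1) = ⊥ := by
  have : IsMulCommutative (rightHom : Wr H G →* G).ker :=
    range_inl_eq_ker_rightHom (φ := wrAut H G) ▸ inferInstance
  exact derivedSeries_succ_eq_bot_of_isMulCommutative_ker rightHom hn

@[simp]
theorem wrAut_apply (g : G) (f : G → H) (x : G) : wrAut H G g f x = f (x * g) := rfl

theorem mulSupport_commutatorElement_inl_inter {K K' : Subgroup G} (hK' : K' ≤ K) {f : G → H}
    (hf : mulSupport f ∩ K = {1}) {a : Wr H G} (haK : a.right ∈ K) (haK' : a.right ∉ K') :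
    mulSupport ⁅a, (inl f : Wr H G)⁆.left ∩ K' = {1} := by
  obtain ⟨⟨hf1, -⟩, hfK_eq⟩ := Set.eq_singleton_iff_unique_mem.1 hf
  have hfK : ∀ s ∈ K, s ≠ 1 → f s = 1 := fun s hs hs1 => by
    by_contra hfs
    exact hs1 (hfK_eq s ⟨hfs, hs⟩)
  rw [commutatorElement_inl, left_inl]
  set g := a.right
  have hg1 : g ≠ 1 := fun hg => haK' (hg ▸ K'.one_mem)
  refine Set.eq_singleton_iff_unique_mem.2 ⟨⟨?_, K'.one_mem⟩, fun x ⟨hx, hxK'⟩ => ?_⟩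
  · simpa [hfK g haK hg1] using hf1
  · by_contra hx1
    have hxg : x * g ≠ 1 := fun hxg => haK' (by
      rw [← inv_inv g, ← eq_inv_of_mul_eq_one_left hxg]
      exact K'.inv_mem hxK')
    exact hx (by simp [hfK x (hK' hxK') hx1, hfK (x * g) (K.mul_mem (hK' hxK') haK) hxg])

theorem exists_mulSupport_inter_eq_one_inl_mem_derivedSeries [Nontrivial H] (m : ℕ)
    (hG : ∀ k < m, derivedSeries G (k + 1) < derivedSeries G k) :
    ∃ f : G → H, mulSupport f ∩ derivedSeries G m = {1} ∧
      (inl f : Wr H G) ∈ derivedSeries (Wr H G) m := by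
  induction m with
  | zero =>
    classical
    obtain ⟨h, hh⟩ := exists_ne (1 : H)
    refine ⟨Pi.mulSingle 1 h, ?_, Subgroup.mem_top _⟩
    rw [Pi.mulSupport_mulSingle_of_ne hh, derivedSeries_zero, Subgroup.coe_top, Set.inter_univ]
  | succ m ih =>
    obtain ⟨f, hf, hfm⟩ := ih fun k hk => hG k (hk.trans m.lt_succ_self)
    obtain ⟨g, hgm, hgm'⟩ := SetLike.exists_of_lt (hG m m.lt_succ_self)
    obtain ⟨a, ham, rfl⟩ := derivedSeries_le_map_derivedSeries
      (rightHom_surjective (N := G → H) (φ := wrAut H G)) m hgm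
    refine ⟨_, mulSupport_commutatorElement_inl_inter (derivedSeries_antitone G m.le_succ) hf
      hgm hgm', ?_⟩
    have hinl : (inl ⁅a, (inl f : Wr H G)⁆.left : Wr H G) = ⁅a, inl f⁆ := by
      rw [commutatorElement_inl, left_inl]
    rw [hinl, derivedSeries_succ]
    exact Subgroup.commutator_mem_commutator ham hfm

theorem derivedSeries_wr_ne_bot [Nontrivial H] {m : ℕ}
    (hG : ∀ k < m, derivedSeries G (k + 1) < derivedSeries G k) :
    derivedSeries (Wr H G) m ≠ ⊥ := by
  obtain ⟨f, hf, hfm⟩ := exists_mulSupport_inter_eq_one_inl_mem_derivedSeries (H := H) m hG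
  have hf1 : f 1 ≠ 1 := (Set.eq_singleton_iff_unique_mem.1 hf).1.1
  intro hbot
  rw [hbot, Subgroup.mem_bot, ← map_one inl, inl_injective.eq_iff] at hfm
  exact hf1 (congrFun hfm 1)

theorem dl_wr [IsMulCommutative H] [Nontrivial H] [Group.IsSolvable G] :
    dl (Wr H G) = dl G + 1 := by
  have hbot : derivedSeries G (dl G) = ⊥ := Nat.sInf_mem Group.IsSolvable.solvable
  exact (dl_eq_succ_iff _).2 ⟨derivedSeries_wr_succ_eq_bot hbot, derivedSeries_wr_ne_bot
    fun k hk => derivedSeries_succ_lt_of_ne_bot hbot (Nat.notMem_of_lt_sInf hk)⟩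

end Wr

/-- The derived length of a descending iterated standard wreath
product of `r` nontrivial finite cyclic groups (head `C₁` and tail list of length
`r - 1`) is exactly `r`. -/
theorem stmt10 (C₁ : GrpCat.{u}) (l : List GrpCat.{u})
    (h : ∀ H ∈ C₁ :: l, Finite H ∧ IsCyclic H ∧ Nontrivial H) :
    dl (descW C₁ l) = l.length + 1 := by
  induction l generalizing C₁ with
  | nil =>
    obtain ⟨-, _, _⟩ := h C₁ List.mem_cons_self
    exact dl_eq_one (G := C₁)
  | cons C₂ t ih =>
    obtain ⟨-, _, _⟩ := h C₁ List.mem_cons_self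
    have hdl := ih C₂ fun H hH => h H (List.mem_cons_of_mem _ hH)
    have := isSolvable_of_dl_ne_zero (by rw [hdl]; exact t.length.succ_ne_zero)
    exact (dl_wr (H := C₁) (G := descW C₂ t)).trans (by rw [hdl, List.length_cons])
end

section
/- For n ≥ 3, the dihedral group D_n = ⟨σ, τ | σ² = τⁿ = 1, στσ = τ⁻¹⟩ has wreath length 2, while d(D_n) = 1 if n is odd and d(D_n) = 2 if n is even; in particular wl(S₃) = 2 ≠ 1 = d(S₃). -/
/-- Wreath length: the least `r ≥ 1` such that `G` is an epimorphic image of a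
descending iterated standard wreath product of `r` finite cyclic groups. -/
noncomputable def wl (G : Type u) [Group G] : ℕ :=
  sInf {r | ∃ (C : GrpCat.{u}) (l : List GrpCat.{u}), r = l.length + 1 ∧
    (Finite C ∧ IsCyclic C) ∧ (∀ H ∈ l, Finite H ∧ IsCyclic H) ∧
    ∃ π : descW C l →* G, Function.Surjective π}

/-!
`D_n` is a non-abelian quotient of `(ℤ/n) ≀ (ℤ/2)`, whereas every quotient of a single cyclic group
is abelian; hence `wl(D_n) = 2`. For odd `n` the conjugates `r k * sr 0 * r (-k) = sr (-2k)` of one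
reflection exhaust all reflections since `2` is a unit mod `n`, so `sr 0` alone normally generates.
For even `n`, `D_n` maps onto the abelian, non-cyclic `D_2`, where a single element normally
generates only its cyclic subgroup; so two normal generators are needed, and `r 1, sr 0` suffice.
`S₃` is the image of `D_3`.
-/

open Subgroup

section NormalClosure

variable {G H : Type*} [Group G] [Group H]

theorem normalClosure_singleton_map_eq_top {f : G →* H} (hf : Function.Surjective f) {x : G}
    (hx : normalClosure ({x} : Set G) = ⊤) : normalClosure ({f x} : Set H) = ⊤ := by
  rw [← Set.image_singleton, ← map_normalClosure _ f hf, hx, map_top_of_surjective f hf]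

theorem normalClosure_singleton_ne_top_of_surjective [IsMulCommutative H] (hH : ¬IsCyclic H)
    {f : G →* H} (hf : Function.Surjective f) (x : G) : normalClosure ({x} : Set G) ≠ ⊤ :=
  fun hx => hH <| isCyclic_iff_exists_zpowers_eq_top.2 ⟨f x, top_le_iff.1 <|
    (normalClosure_singleton_map_eq_top hf hx).ge.trans <| normalClosure_le_normal <| by simp⟩

theorem IsMulCommutative.of_surjective [IsMulCommutative G] {f : G →* H}
    (hf : Function.Surjective f) : IsMulCommutative H := by
  refine isMulCommutative_iff.2 fun a b => ?_
  obtain ⟨x, rfl⟩ := hf a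
  obtain ⟨y, rfl⟩ := hf b
  rw [← map_mul, mul_comm', map_mul]

end NormalClosure

section NormalGenerators

variable {G : Type*} [Group G]

theorem dgen_le_card {S : Finset G} (hS : normalClosure (S : Set G) = ⊤) : dgen G ≤ S.card :=
  Nat.sInf_le ⟨S, rfl, hS⟩

theorem le_dgen {k : ℕ} {S₀ : Finset G} (hS₀ : normalClosure (S₀ : Set G) = ⊤)
    (h : ∀ S : Finset G, normalClosure (S : Set G) = ⊤ → k ≤ S.card) : k ≤ dgen G :=
  le_csInf ⟨_, S₀, rfl, hS₀⟩ <| by rintro _ ⟨S, rfl, hS⟩; exact h S hS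

theorem dgen_eq_one [Nontrivial G] {x : G} (hx : normalClosure ({x} : Set G) = ⊤) :
    dgen G = 1 := by
  have hx' : normalClosure (({x} : Finset G) : Set G) = ⊤ := by simpa using hx
  refine le_antisymm (dgen_le_card hx') (le_dgen hx' fun S hS => Finset.card_pos.2 ?_)
  rw [Finset.nonempty_iff_ne_empty]
  rintro rfl
  simp [normalClosure_empty] at hS

theorem dgen_eq_two {x y : G} (hxy : normalClosure ({x, y} : Set G) = ⊤)
    (h : ∀ z : G, normalClosure ({z} : Set G) ≠ ⊤) : dgen G = 2 := by
  classical
  have hxy' : normalClosure (({x, y} : Finset G) : Set G) = ⊤ := by simpa using hxy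
  refine le_antisymm ((dgen_le_card hxy').trans Finset.card_le_two) (le_dgen hxy' fun S hS => ?_)
  by_contra! hS₂
  obtain ⟨z, hz⟩ := Finset.card_le_one_iff_subset_singleton.1 (Nat.le_of_lt_succ hS₂)
  exact h z <| top_le_iff.1 <| hS ▸ normalClosure_mono (by exact_mod_cast hz)

end NormalGenerators

theorem wl_eq_two {G A B : Type u} [Group G] [Group A] [Group B] [Finite A] [IsCyclic A]
    [Finite B] [IsCyclic B] {π : Wr A B →* G} (hπ : Function.Surjective π)
    (hG : ¬IsMulCommutative G) : wl G = 2 := by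
  have h₂ : 2 ∈ {r | ∃ (C : GrpCat.{u}) (l : List GrpCat.{u}), r = l.length + 1 ∧
      (Finite C ∧ IsCyclic C) ∧ (∀ H ∈ l, Finite H ∧ IsCyclic H) ∧
      ∃ π : descW C l →* G, Function.Surjective π} :=
    ⟨GrpCat.of A, [GrpCat.of B], rfl, ⟨‹_›, ‹_›⟩, by simp [*], π, hπ⟩
  refine le_antisymm (Nat.sInf_le h₂) (le_csInf ⟨2, h₂⟩ ?_)
  rintro _ ⟨C, _ | ⟨_, _⟩, rfl, ⟨-, hC⟩, -, π', hπ'⟩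
  · have : IsMulCommutative C := hC.isMulCommutative
    exact absurd (IsMulCommutative.of_surjective (G := C) hπ') hG
  · simp

namespace DihedralGroup

variable {m n : ℕ}

def castHom (h : m ∣ n) : DihedralGroup n →* DihedralGroup m where
  toFun
    | r i => r (ZMod.castHom h (ZMod m) i)
    | sr i => sr (ZMod.castHom h (ZMod m) i)
  map_one' := by simp [one_def, -r_zero]
  map_mul' := by
    rintro (i | i) (j | j) <;>
      simp [r_mul_r, r_mul_sr, sr_mul_r, sr_mul_sr, -ZMod.castHom_apply]

theorem castHom_surjective (h : m ∣ n) : Function.Surjective (castHom h) := by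
  rintro (i | i) <;> obtain ⟨j, rfl⟩ := ZMod.castHom_surjective h i
  exacts [⟨r j, rfl⟩, ⟨sr j, rfl⟩]

theorem normalClosure_sr_zero_eq_top (hn : Odd n) :
    normalClosure ({sr 0} : Set (DihedralGroup n)) = ⊤ := by
  set N := normalClosure ({sr 0} : Set (DihedralGroup n))
  obtain ⟨u, hu⟩ : IsUnit (2 : ZMod n) := by
    simpa using (ZMod.isUnit_iff_coprime 2 n).2 (Nat.coprime_two_left.2 hn)
  have hu' : (2 : ZMod n) * ↑u⁻¹ = 1 := by rw [← hu, Units.mul_inv]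
  have hsr (j : ZMod n) : sr j ∈ N := by
    have hc := (normalClosure_normal (s := {sr 0})).conj_mem _ (subset_normalClosure rfl)
      (r (-((↑u⁻¹ : ZMod n) * j)))
    rw [inv_r, r_mul_sr, sr_mul_r] at hc
    convert hc using 2
    linear_combination -j * hu'
  rw [eq_top_iff']
  rintro (i | i)
  · simpa [sr_mul_sr] using N.mul_mem (hsr 0) (hsr i)
  · exact hsr i

theorem normalClosure_r_one_sr_zero_eq_top :
    normalClosure ({r 1, sr 0} : Set (DihedralGroup n)) = ⊤ := by
  set N := normalClosure ({r 1, sr 0} : Set (DihedralGroup n))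
  have hr (i : ZMod n) : r i ∈ N := by
    simpa [r_one_zpow] using N.zpow_mem (subset_normalClosure (Set.mem_insert _ _)) i.cast
  rw [eq_top_iff']
  rintro (i | i)
  · exact hr i
  · simpa [sr_mul_r] using
      N.mul_mem (subset_normalClosure (Set.mem_insert_of_mem _ rfl)) (hr i)

end DihedralGroup

namespace Multiplicative

theorem eq_one_or_eq_ofAdd_one (g : Multiplicative (ZMod 2)) : g = 1 ∨ g = ofAdd 1 := by
  revert g
  decide

theorem ofAdd_one_mul_self : (ofAdd 1 : Multiplicative (ZMod 2)) * ofAdd 1 = 1 := by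
  decide

end Multiplicative

namespace DihedralGroup

open Multiplicative

variable {n : ℕ}

def baseDiff (f : Multiplicative (ZMod 2) → Multiplicative (ZMod n)) : ZMod n :=
  (f 1).toAdd - (f (ofAdd 1)).toAdd

theorem baseDiff_mul (f₁ f₂ : Multiplicative (ZMod 2) → Multiplicative (ZMod n)) :
    baseDiff (f₁ * f₂) = baseDiff f₁ + baseDiff f₂ := by
  simp only [baseDiff, Pi.mul_apply, toAdd_mul]
  ring

theorem baseDiff_wrAut (f : Multiplicative (ZMod 2) → Multiplicative (ZMod n)) :
    baseDiff (wrAut _ _ (ofAdd 1) f) = -baseDiff f := by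
  simp only [baseDiff, wrAut, MonoidHom.coe_mk, OneHom.coe_mk, MulEquiv.coe_mk, Equiv.coe_fn_mk,
    one_mul, ofAdd_one_mul_self]
  ring

-- The shift by `ofAdd 1` negates `baseDiff`, as conjugation by a reflection inverts a rotation.
def ofWr (n : ℕ) : Wr (Multiplicative (ZMod n)) (Multiplicative (ZMod 2)) →* DihedralGroup n where
  toFun x := if x.right = 1 then r (baseDiff x.left) else sr (-baseDiff x.left)
  map_one' := by simp [baseDiff, one_def, -r_zero]
  map_mul' a b := by
    rcases eq_one_or_eq_ofAdd_one a.right with ha | ha <;>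
      rcases eq_one_or_eq_ofAdd_one b.right with hb | hb <;>
      simp [ha, hb, ofAdd_one_mul_self, baseDiff_mul, baseDiff_wrAut, r_mul_r, r_mul_sr, sr_mul_r,
        sr_mul_sr] <;> ring

theorem ofWr_surjective (n : ℕ) : Function.Surjective (ofWr n) := by
  rintro (i | i)
  · exact ⟨⟨fun x => if x = 1 then ofAdd i else 1, 1⟩, by simp [ofWr, baseDiff]⟩
  · exact ⟨⟨fun x => if x = 1 then ofAdd (-i) else 1, ofAdd 1⟩, by simp [ofWr, baseDiff]⟩

end DihedralGroup

open DihedralGroup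

def dihedralThreeToPerm : DihedralGroup 3 →* Equiv.Perm (Fin 3) :=
  MonoidHom.mk'
    (fun
      | r i => finRotate 3 ^ i.val
      | sr i => Equiv.swap 0 1 * finRotate 3 ^ i.val)
    (by decide)

theorem dihedralThreeToPerm_surjective : Function.Surjective dihedralThreeToPerm := by
  decide

/-- For `n ≥ 3`, the dihedral group `D_n` has wreath length `2`,
while `d(D_n) = 1` if `n` is odd and `d(D_n) = 2` if `n` is even; in particular
`wl(S₃) = 2 ≠ 1 = d(S₃)`. -/
theorem stmt18 :
    (∀ n : ℕ, 3 ≤ n →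
      wl (DihedralGroup n) = 2 ∧
      (Odd n → dgen (DihedralGroup n) = 1) ∧
      (Even n → dgen (DihedralGroup n) = 2)) ∧
    wl (Equiv.Perm (Fin 3)) = 2 ∧ dgen (Equiv.Perm (Fin 3)) = 1 := by
  refine ⟨fun n hn => ⟨?_, fun hodd => dgen_eq_one (normalClosure_sr_zero_eq_top hodd),
    fun heven => dgen_eq_two normalClosure_r_one_sr_zero_eq_top fun x => ?_⟩, ?_, ?_⟩
  · have : NeZero n := ⟨by omega⟩
    exact wl_eq_two (ofWr_surjective n) (not_commutative (by omega) (by omega))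
  · have : IsMulCommutative (DihedralGroup 2) := IsKleinFour.isMulCommutative
    exact normalClosure_singleton_ne_top_of_surjective (not_isCyclic (by decide))
      (castHom_surjective heven.two_dvd) x
  · refine wl_eq_two (π := dihedralThreeToPerm.comp (ofWr 3))
      (dihedralThreeToPerm_surjective.comp (ofWr_surjective 3)) ?_
    simp [Equiv.Perm.isMulCommutative_iff_card_le_two]
  · exact dgen_eq_one (normalClosure_singleton_map_eq_top dihedralThreeToPerm_surjective
      (normalClosure_sr_zero_eq_top (by decide)))
end
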